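/- Define subsets of ℂ² (coordinates (c₀,c₁)): B₁ = {c₁ ∈ −1/2 + (1/2)ℤ_{≤0}} \ {c₁ = −1}, B₋₁ = {c₁ ∈ 3/2 + (1/2)ℤ_{≥0}} \ {c₁ = 2}, B₂ = {c₀ ∈ −1 + (1/2)ℤ_{≤0}}, B₋₂ = {c₀ ∈ (1/2)ℤ_{≥0}}, B₃ = {c₀−c₁ ∈ −5/2 + ℤ_{≤0}}, B₋₃ = {c₀−c₁ ∈ 1/2 + ℤ_{≥0}}, B₄ = {c₀+c₁ ∈ −3/2 + ℤ_{≤0}}, B₋₄ = {c₀+c₁ ∈ 3/2 + ℤ_{≥0}}; and regions A = {c₀ > −1, c₁−c₀ ≥ 5/2}, B₊ = {c₀ ≤ −1, c₀+c₁ ≥ 1/2}, B₋ = {c₁ ≥ 3/2, c₁−c₀ > 1/2}, C = {c₀ < 0, c₀−c₁ ≥ 1/2}, D₊ = {c₁ ≤ −1/2, c₀+c₁ ≥ −1/2}, D₋ = {c₀ ≥ 0, c₀−c₁ > 1/2} in ℝ². Then (B₁∪B₂∪B₃∪B₄) ∩ (B₋₁∪B₋₂∪B₋₃∪B₋₄)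 ⊆ A ∪ B₊ ∪ B₋ ∪ C ∪ D₊ ∪ D₋. -/
import Mathlib


/-- The bad-parameter sets `B₁,…,B₄, B₋₁,…,B₋₄ ⊆ ℂ²` (coordinates `(c₀, c₁)`)
for `W = B₂ = G(2,1,2)`, indexed by `i ∈ {±1,±2,±3,±4}` (empty otherwise). -/
noncomputable def BB2 (i : ℤ) : Set (ℂ × ℂ) :=
  if i = 1 then {p | (∃ m : ℤ, m ≤ 0 ∧ p.2 = -1/2 + (m : ℂ)/2) ∧ p.2 ≠ -1}
  else if i = -1 then {p | (∃ m : ℤ, 0 ≤ m ∧ p.2 = 3/2 + (m : ℂ)/2) ∧ p.2 ≠ 2}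
  else if i = 2 then {p | ∃ m : ℤ, m ≤ 0 ∧ p.1 = -1 + (m : ℂ)/2}
  else if i = -2 then {p | ∃ m : ℤ, 0 ≤ m ∧ p.1 = (m : ℂ)/2}
  else if i = 3 then {p | ∃ m : ℤ, m ≤ 0 ∧ p.1 - p.2 = -5/2 + (m : ℂ)}
  else if i = -3 then {p | ∃ m : ℤ, 0 ≤ m ∧ p.1 - p.2 = 1/2 + (m : ℂ)}
  else if i = 4 then {p | ∃ m : ℤ, m ≤ 0 ∧ p.1 + p.2 = -3/2 + (m : ℂ)}
  else if i = -4 then {p | ∃ m : ℤ, 0 ≤ m ∧ p.1 + p.2 = 3/2 + (m : ℂ)}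
  else ∅

/-- Region `A`: `c₀ > −1`, `c₁ − c₀ ≥ 5/2`. -/
def regA2 : Set (ℂ × ℂ) :=
  {p | p.1.im = 0 ∧ p.2.im = 0 ∧ -1 < p.1.re ∧ 5/2 ≤ p.2.re - p.1.re}

/-- Region `B₊`: `c₀ ≤ −1`, `c₀ + c₁ ≥ 1/2`. -/
def regBp : Set (ℂ × ℂ) :=
  {p | p.1.im = 0 ∧ p.2.im = 0 ∧ p.1.re ≤ -1 ∧ 1/2 ≤ p.1.re + p.2.re}

/-- Region `B₋`: `c₁ ≥ 3/2`, `c₁ − c₀ > 1/2`. -/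
def regBm : Set (ℂ × ℂ) :=
  {p | p.1.im = 0 ∧ p.2.im = 0 ∧ 3/2 ≤ p.2.re ∧ 1/2 < p.2.re - p.1.re}

/-- Region `C`: `c₀ < 0`, `c₀ − c₁ ≥ 1/2`. -/
def regC2 : Set (ℂ × ℂ) :=
  {p | p.1.im = 0 ∧ p.2.im = 0 ∧ p.1.re < 0 ∧ 1/2 ≤ p.1.re - p.2.re}

/-- Region `D₊`: `c₁ ≤ −1/2`, `c₀ + c₁ ≥ −1/2`. -/
def regDp : Set (ℂ × ℂ) :=
  {p | p.1.im = 0 ∧ p.2.im = 0 ∧ p.2.re ≤ -1/2 ∧ -1/2 ≤ p.1.re + p.2.re}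

/-- Region `D₋`: `c₀ ≥ 0`, `c₀ − c₁ > 1/2`. -/
def regDm : Set (ℂ × ℂ) :=
  {p | p.1.im = 0 ∧ p.2.im = 0 ∧ 0 ≤ p.1.re ∧ 1/2 < p.1.re - p.2.re}

private lemma mem1 {p : ℂ × ℂ} (h : p ∈ BB2 1) : p.2.im = 0 ∧ p.2.re ≤ -1/2 := by
  have h' : (∃ m : ℤ, m ≤ 0 ∧ p.2 = -1/2 + (m : ℂ)/2) ∧ p.2 ≠ -1 := by simpa [BB2] using h
  obtain ⟨⟨m, hm, he⟩, -⟩ := h'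
  obtain ⟨hre, him⟩ := Complex.ext_iff.mp he
  simp at hre him
  have hm' : (m : ℝ) ≤ 0 := by exact_mod_cast hm
  exact ⟨by linarith [him], by rw [hre]; linarith⟩

private lemma mem1' {p : ℂ × ℂ} (h : p ∈ BB2 (-1)) : p.2.im = 0 ∧ 3/2 ≤ p.2.re := by
  have h' : (∃ m : ℤ, 0 ≤ m ∧ p.2 = 3/2 + (m : ℂ)/2) ∧ p.2 ≠ 2 := by simpa [BB2] using h
  obtain ⟨⟨m, hm, he⟩, -⟩ := h'
  obtain ⟨hre, him⟩ := Complex.ext_iff.mp he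
  simp at hre him
  have hm' : (0:ℝ) ≤ (m : ℝ) := by exact_mod_cast hm
  exact ⟨by linarith [him], by rw [hre]; linarith⟩

private lemma mem2 {p : ℂ × ℂ} (h : p ∈ BB2 2) : p.1.im = 0 ∧ p.1.re ≤ -1 := by
  have h' : ∃ m : ℤ, m ≤ 0 ∧ p.1 = -1 + (m : ℂ)/2 := by simpa [BB2] using h
  obtain ⟨m, hm, he⟩ := h'
  obtain ⟨hre, him⟩ := Complex.ext_iff.mp he
  simp at hre him
  have hm' : (m : ℝ) ≤ 0 := by exact_mod_cast hm
  exact ⟨by linarith [him], by rw [hre]; linarith⟩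

private lemma mem2' {p : ℂ × ℂ} (h : p ∈ BB2 (-2)) : p.1.im = 0 ∧ 0 ≤ p.1.re := by
  have h' : ∃ m : ℤ, 0 ≤ m ∧ p.1 = (m : ℂ)/2 := by simpa [BB2] using h
  obtain ⟨m, hm, he⟩ := h'
  obtain ⟨hre, him⟩ := Complex.ext_iff.mp he
  simp at hre him
  have hm' : (0:ℝ) ≤ (m : ℝ) := by exact_mod_cast hm
  exact ⟨by linarith [him], by rw [hre]; linarith⟩

private lemma mem3 {p : ℂ × ℂ} (h : p ∈ BB2 3) : p.1.im = p.2.im ∧ p.1.re - p.2.re ≤ -5/2 := by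
  have h' : ∃ m : ℤ, m ≤ 0 ∧ p.1 - p.2 = -5/2 + (m : ℂ) := by simpa [BB2] using h
  obtain ⟨m, hm, he⟩ := h'
  obtain ⟨hre, him⟩ := Complex.ext_iff.mp he
  simp [Complex.sub_re, Complex.sub_im] at hre him
  have hm' : (m : ℝ) ≤ 0 := by exact_mod_cast hm
  exact ⟨by linarith [him], by linarith [hre]⟩

private lemma mem3' {p : ℂ × ℂ} (h : p ∈ BB2 (-3)) : p.1.im = p.2.im ∧ 1/2 ≤ p.1.re - p.2.re := by
  have h' : ∃ m : ℤ, 0 ≤ m ∧ p.1 - p.2 = 1/2 + (m : ℂ) := by simpa [BB2] using h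
  obtain ⟨m, hm, he⟩ := h'
  obtain ⟨hre, him⟩ := Complex.ext_iff.mp he
  simp [Complex.sub_re, Complex.sub_im] at hre him
  have hm' : (0:ℝ) ≤ (m : ℝ) := by exact_mod_cast hm
  exact ⟨by linarith [him], by linarith [hre]⟩

private lemma mem4 {p : ℂ × ℂ} (h : p ∈ BB2 4) : p.1.im + p.2.im = 0 ∧ p.1.re + p.2.re ≤ -3/2 := by
  have h' : ∃ m : ℤ, m ≤ 0 ∧ p.1 + p.2 = -3/2 + (m : ℂ) := by simpa [BB2] using h
  obtain ⟨m, hm, he⟩ := h'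
  obtain ⟨hre, him⟩ := Complex.ext_iff.mp he
  simp [Complex.add_re, Complex.add_im] at hre him
  have hm' : (m : ℝ) ≤ 0 := by exact_mod_cast hm
  exact ⟨by linarith [him], by linarith [hre]⟩

private lemma mem4' {p : ℂ × ℂ} (h : p ∈ BB2 (-4)) : p.1.im + p.2.im = 0 ∧ 3/2 ≤ p.1.re + p.2.re := by
  have h' : ∃ m : ℤ, 0 ≤ m ∧ p.1 + p.2 = 3/2 + (m : ℂ) := by simpa [BB2] using h
  obtain ⟨m, hm, he⟩ := h'
  obtain ⟨hre, him⟩ := Complex.ext_iff.mp he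
  simp [Complex.add_re, Complex.add_im] at hre him
  have hm' : (0:ℝ) ≤ (m : ℝ) := by exact_mod_cast hm
  exact ⟨by linarith [him], by linarith [hre]⟩

/-- `(B₁∪B₂∪B₃∪B₄) ∩ (B₋₁∪B₋₂∪B₋₃∪B₋₄) ⊆ A ∪ B₊ ∪ B₋ ∪ C ∪ D₊ ∪ D₋`. -/
theorem stmt7 :
    (BB2 1 ∪ BB2 2 ∪ BB2 3 ∪ BB2 4) ∩ (BB2 (-1) ∪ BB2 (-2) ∪ BB2 (-3) ∪ BB2 (-4)) ⊆
      regA2 ∪ regBp ∪ regBm ∪ regC2 ∪ regDp ∪ regDm := by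
  rintro p ⟨hp, hn⟩
  simp only [Set.mem_union] at hp hn ⊢
  rcases hp with ((h1 | h1) | h1) | h1 <;> rcases hn with ((h2 | h2) | h2) | h2
  · obtain ⟨i1, a⟩ := mem1 h1
    obtain ⟨i2, b⟩ := mem1' h2
    exfalso; linarith
  · obtain ⟨i1, a⟩ := mem1 h1
    obtain ⟨i2, b⟩ := mem2' h2
    rcases le_or_gt (-1/2 : ℝ) (p.1.re + p.2.re) with hc | hc
    · refine Or.inl (Or.inr ?_)
      show p ∈ regDp
      exact ⟨by linarith, by linarith, by linarith, by linarith⟩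
    · refine Or.inr ?_
      show p ∈ regDm
      exact ⟨by linarith, by linarith, by linarith, by linarith⟩
  · obtain ⟨i1, a⟩ := mem1 h1
    obtain ⟨i2, b⟩ := mem3' h2
    rcases lt_or_ge p.1.re 0 with hc | hc
    · refine Or.inl (Or.inl (Or.inr ?_))
      show p ∈ regC2
      exact ⟨by linarith, by linarith, by linarith, by linarith⟩
    · rcases lt_or_ge (1/2 : ℝ) (p.1.re - p.2.re) with hd | hd
      · refine Or.inr ?_
        show p ∈ regDm
        exact ⟨by linarith, by linarith, by linarith, by linarith⟩
      · refine Or.inl (Or.inr ?_)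
        show p ∈ regDp
        exact ⟨by linarith, by linarith, by linarith, by linarith⟩
  · obtain ⟨i1, a⟩ := mem1 h1
    obtain ⟨i2, b⟩ := mem4' h2
    refine Or.inl (Or.inr ?_)
    show p ∈ regDp
    exact ⟨by linarith, by linarith, by linarith, by linarith⟩
  · obtain ⟨i1, a⟩ := mem2 h1
    obtain ⟨i2, b⟩ := mem1' h2
    refine Or.inl (Or.inl (Or.inl (Or.inr ?_)))
    show p ∈ regBm
    exact ⟨by linarith, by linarith, by linarith, by linarith⟩
  · obtain ⟨i1, a⟩ := mem2 h1
    obtain ⟨i2, b⟩ := mem2' h2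
    exfalso; linarith
  · obtain ⟨i1, a⟩ := mem2 h1
    obtain ⟨i2, b⟩ := mem3' h2
    refine Or.inl (Or.inl (Or.inr ?_))
    show p ∈ regC2
    exact ⟨by linarith, by linarith, by linarith, by linarith⟩
  · obtain ⟨i1, a⟩ := mem2 h1
    obtain ⟨i2, b⟩ := mem4' h2
    refine Or.inl (Or.inl (Or.inl (Or.inl (Or.inr ?_))))
    show p ∈ regBp
    exact ⟨by linarith, by linarith, by linarith, by linarith⟩
  · obtain ⟨i1, a⟩ := mem3 h1
    obtain ⟨i2, b⟩ := mem1' h2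
    refine Or.inl (Or.inl (Or.inl (Or.inr ?_)))
    show p ∈ regBm
    exact ⟨by linarith, by linarith, by linarith, by linarith⟩
  · obtain ⟨i1, a⟩ := mem3 h1
    obtain ⟨i2, b⟩ := mem2' h2
    refine Or.inl (Or.inl (Or.inl (Or.inl (Or.inl ?_))))
    show p ∈ regA2
    exact ⟨by linarith, by linarith, by linarith, by linarith⟩
  · obtain ⟨i1, a⟩ := mem3 h1
    obtain ⟨i2, b⟩ := mem3' h2
    exfalso; linarith
  · obtain ⟨i1, a⟩ := mem3 h1
    obtain ⟨i2, b⟩ := mem4' h2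
    refine Or.inl (Or.inl (Or.inl (Or.inr ?_)))
    show p ∈ regBm
    exact ⟨by linarith, by linarith, by linarith, by linarith⟩
  · obtain ⟨i1, a⟩ := mem4 h1
    obtain ⟨i2, b⟩ := mem1' h2
    refine Or.inl (Or.inl (Or.inl (Or.inr ?_)))
    show p ∈ regBm
    exact ⟨by linarith, by linarith, by linarith, by linarith⟩
  · obtain ⟨i1, a⟩ := mem4 h1
    obtain ⟨i2, b⟩ := mem2' h2
    refine Or.inr ?_
    show p ∈ regDm
    exact ⟨by linarith, by linarith, by linarith, by linarith⟩
  · obtain ⟨i1, a⟩ := mem4 h1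
    obtain ⟨i2, b⟩ := mem3' h2
    rcases lt_or_ge p.1.re 0 with hc | hc
    · refine Or.inl (Or.inl (Or.inr ?_))
      show p ∈ regC2
      exact ⟨by linarith, by linarith, by linarith, by linarith⟩
    · refine Or.inr ?_
      show p ∈ regDm
      exact ⟨by linarith, by linarith, by linarith, by linarith⟩
  · obtain ⟨i1, a⟩ := mem4 h1
    obtain ⟨i2, b⟩ := mem4' h2
    exfalso; linarith
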